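/- Let p, q ≥ 1 be coprime integers with p + q ≥ 3 and let f = x^p·y^q ∈ ℂ[x,y]. Then the reduced Brieskorn module B̄(f) = B(f)/B(f)_tors is a free ℂ[t]-module of rank 1 generated by the class of x^{p−1}·y^{q−1}: for every g ∈ ℂ[x,y] there exists a unique polynomial P ∈ ℂ[t] such that f^k·(g − P(f)·x^{p−1}·y^{q−1}) ∈ D_f for some k ≥ 0. -/

import Mathlib

open MvPolynomial

/-- Membership in `D_f = {f_x·∂g/∂y − f_y·∂g/∂x : g ∈ ℂ[x,y]}`. -/
def Dmem (f w : MvPolynomial (Fin 2) ℂ) : Prop :=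
  ∃ g : MvPolynomial (Fin 2) ℂ,
    w = pderiv 0 f * pderiv 1 g - pderiv 1 f * pderiv 0 g

/-!
For `f = x^p y^q` the bracket `{f, g} = f_x g_y - f_y g_x` factors as
`x^(p-1) y^(q-1) · (p·y∂_y - q·x∂_x) g`, so `{f, x^a y^b} = (p b - q a) · x^(a+p-1) y^(b+q-1)`.
Thus `D_f` has zero coefficient at every `f^m · x^(p-1) y^(q-1)`, the case `(a, b) = m(p, q)`;
reading these coefficients off `f^k · Q(f) · x^(p-1) y^(q-1) ∈ D_f` forces `Q = 0`, hence uniqueness.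
Conversely, in characteristic zero every other monomial `x^(a+p-1) y^(b+q-1)` lies in `D_f`. The
monomials of `f · g` have `a, b ≥ 1`, where coprimality turns `p b = q a` into `(a, b) = m(p, q)`,
so choosing the coefficients of `P` to be those of `g` at `f^m · x^(p-1) y^(q-1)` gives
`f · (g - P(f) · x^(p-1) y^(q-1)) ∈ D_f`.
-/

namespace Brieskorn

open Finsupp (single)
open LinearMap (range)

variable {R : Type*} {p q : ℕ}

local notation "𝒇" => (X 0 ^ p * X 1 ^ q : MvPolynomial (Fin 2) R)
local notation "𝒆" => (X 0 ^ (p - 1) * X 1 ^ (q - 1) : MvPolynomial (Fin 2) R)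

noncomputable section CommRing

variable [CommRing R]

def poissonBracket (f : MvPolynomial (Fin 2) R) :
    MvPolynomial (Fin 2) R →ₗ[R] MvPolynomial (Fin 2) R :=
  LinearMap.mulLeft R (pderiv 0 f) ∘ₗ (pderiv 1).toLinearMap
    - LinearMap.mulLeft R (pderiv 1 f) ∘ₗ (pderiv 0).toLinearMap

theorem poissonBracket_apply (f g : MvPolynomial (Fin 2) R) :
    poissonBracket f g = pderiv 0 f * pderiv 1 g - pderiv 1 f * pderiv 0 g :=
  rfl

theorem mul_poissonBracket (f g : MvPolynomial (Fin 2) R) :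
    f * poissonBracket f g = poissonBracket f (f * g) := by
  simp only [poissonBracket_apply, Derivation.leibniz, smul_eq_mul]
  ring

theorem pow_mul_mem_range_poissonBracket {f w : MvPolynomial (Fin 2) R}
    (hw : w ∈ range (poissonBracket f)) (k : ℕ) : f ^ k * w ∈ range (poissonBracket f) := by
  induction k with
  | zero => simpa using hw
  | succ k ih =>
    obtain ⟨g, hg⟩ := ih
    exact ⟨f * g, by rw [← mul_poissonBracket, hg, pow_succ', mul_assoc]⟩

def xyExp (a b : ℕ) : Fin 2 →₀ ℕ := single 0 a + single 1 b

@[simp] theorem xyExp_apply_zero (a b : ℕ) : xyExp a b 0 = a := by simp [xyExp]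

@[simp] theorem xyExp_apply_one (a b : ℕ) : xyExp a b 1 = b := by simp [xyExp]

theorem X_pow_mul_X_pow_eq_monomial (a b : ℕ) :
    (X 0 ^ a * X 1 ^ b : MvPolynomial (Fin 2) R) = monomial (xyExp a b) 1 := by
  rw [X_pow_eq_monomial, X_pow_eq_monomial, monomial_mul, one_mul, xyExp]

theorem poissonBracket_X_pow_mul_X_pow (hp : 1 ≤ p) (hq : 1 ≤ q) (g : MvPolynomial (Fin 2) R) :
    poissonBracket 𝒇 g = 𝒆 * ((p : MvPolynomial (Fin 2) R) * (X 1 * pderiv 1 g) -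
      (q : MvPolynomial (Fin 2) R) * (X 0 * pderiv 0 g)) := by
  obtain ⟨a, rfl⟩ := Nat.exists_eq_add_of_le' hp
  obtain ⟨b, rfl⟩ := Nat.exists_eq_add_of_le' hq
  simp only [poissonBracket_apply, Derivation.leibniz, Derivation.leibniz_pow, pderiv_X_self,
    pderiv_X_of_ne, ne_eq, zero_ne_one, one_ne_zero, not_false_eq_true, smul_eq_mul,
    nsmul_eq_mul, add_tsub_cancel_right]
  push_cast
  ring

theorem poissonBracket_monomial (hp : 1 ≤ p) (hq : 1 ≤ q) (d : Fin 2 →₀ ℕ) (c : R) :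
    poissonBracket 𝒇 (monomial d c) =
      (p * d 1 - q * d 0 : R) • monomial (d + xyExp (p - 1) (q - 1)) c := by
  rw [poissonBracket_X_pow_mul_X_pow hp hq, X_mul_pderiv_monomial, X_mul_pderiv_monomial,
    X_pow_mul_X_pow_eq_monomial, smul_eq_C_mul, add_comm, ← one_mul c, ← monomial_mul, one_mul]
  simp only [nsmul_eq_mul, map_sub, map_mul, map_natCast]
  ring

theorem coeff_poissonBracket_nsmul_add (hp : 1 ≤ p) (hq : 1 ≤ q) (m : ℕ)
    (g : MvPolynomial (Fin 2) R) :
    coeff (m • xyExp p q + xyExp (p - 1) (q - 1)) (poissonBracket 𝒇 g) = 0 := by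
  induction g using MvPolynomial.induction_on' with
  | add g₁ g₂ h₁ h₂ => rw [map_add, coeff_add, h₁, h₂, add_zero]
  | monomial d c =>
    rw [poissonBracket_monomial hp hq, coeff_smul, coeff_monomial]
    split_ifs with h
    · obtain rfl := add_right_cancel h
      simp only [Finsupp.smul_apply, xyExp_apply_zero, xyExp_apply_one, smul_eq_mul,
        Nat.cast_mul]
      ring
    · rw [smul_zero]

theorem nsmul_xyExp_add_injective (hp : 1 ≤ p) (e : Fin 2 →₀ ℕ) :
    Function.Injective fun m : ℕ => m • xyExp p q + e := by
  intro m n h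
  have h0 := DFunLike.congr_fun (add_right_cancel h) 0
  simp only [Finsupp.smul_apply, xyExp_apply_zero, smul_eq_mul] at h0
  exact Nat.eq_of_mul_eq_mul_right hp h0

theorem coeff_aeval_mul (hp : 1 ≤ p) (Q : Polynomial R) (m : ℕ) :
    coeff (m • xyExp p q + xyExp (p - 1) (q - 1)) (Polynomial.aeval 𝒇 Q * 𝒆) = Q.coeff m := by
  induction Q using Polynomial.induction_on' with
  | add Q₁ Q₂ h₁ h₂ => rw [map_add, add_mul, coeff_add, h₁, h₂, Polynomial.coeff_add]
  | monomial n a =>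
    rw [Polynomial.aeval_monomial, algebraMap_eq, X_pow_mul_X_pow_eq_monomial,
      X_pow_mul_X_pow_eq_monomial, monomial_pow, one_pow, C_mul_monomial, monomial_mul, mul_one]
    simp only [coeff_monomial, Polynomial.coeff_monomial, (nsmul_xyExp_add_injective hp _).eq_iff,
      mul_one]

theorem eq_zero_of_aeval_mul_mem_range (hp : 1 ≤ p) (hq : 1 ≤ q) {Q : Polynomial R}
    (hQ : Polynomial.aeval 𝒇 Q * 𝒆 ∈ range (poissonBracket 𝒇)) : Q = 0 := by
  obtain ⟨g, hg⟩ := hQ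
  ext m
  rw [← coeff_aeval_mul hp Q m, ← hg, coeff_poissonBracket_nsmul_add hp hq, Polynomial.coeff_zero]

theorem eq_of_pow_mul_sub_aeval_mul_mem_range (hp : 1 ≤ p) (hq : 1 ≤ q)
    {g : MvPolynomial (Fin 2) R} {P₁ P₂ : Polynomial R} {k₁ k₂ : ℕ}
    (h₁ : 𝒇 ^ k₁ * (g - Polynomial.aeval 𝒇 P₁ * 𝒆) ∈ range (poissonBracket 𝒇))
    (h₂ : 𝒇 ^ k₂ * (g - Polynomial.aeval 𝒇 P₂ * 𝒆) ∈ range (poissonBracket 𝒇)) :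
    P₁ = P₂ := by
  have hdiff : Polynomial.aeval 𝒇 (Polynomial.X ^ (k₁ + k₂) * (P₂ - P₁)) * 𝒆 ∈
      range (poissonBracket 𝒇) := by
    convert sub_mem (pow_mul_mem_range_poissonBracket h₁ k₂)
      (pow_mul_mem_range_poissonBracket h₂ k₁) using 1
    simp only [map_mul, map_pow, map_sub, Polynomial.aeval_X]
    ring
  have hzero := eq_zero_of_aeval_mul_mem_range hp hq hdiff
  rw [(Polynomial.monic_X_pow _).mul_right_eq_zero_iff, sub_eq_zero] at hzero
  exact hzero.symm

theorem exists_coeff_eq_coeff_comp {σ : Type*} (g : MvPolynomial σ R) {φ : ℕ → σ →₀ ℕ}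
    (hφ : Function.Injective φ) : ∃ P : Polynomial R, ∀ m, P.coeff m = coeff (φ m) g :=
  ⟨⟨⟨Finsupp.comapDomain φ (AddMonoidAlgebra.coeff g) hφ.injOn⟩⟩, fun _ => rfl⟩

end CommRing

theorem exists_eq_nsmul_xyExp_add_of_coprime (hpq : p.Coprime q) {d : Fin 2 →₀ ℕ}
    (h : p * (d 1 + 1) = q * (d 0 + 1)) :
    ∃ m : ℕ, d = m • xyExp p q + xyExp (p - 1) (q - 1) := by
  obtain ⟨n, h0⟩ := hpq.dvd_of_dvd_mul_left (Dvd.intro _ h)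
  have hp : 0 < p := Nat.pos_of_ne_zero (by rintro rfl; simp at h0)
  have h1 : d 1 + 1 = q * n := Nat.eq_of_mul_eq_mul_left hp (by rw [h, h0]; ring)
  have hq : 0 < q := Nat.pos_of_ne_zero (by rintro rfl; simp at h1)
  obtain ⟨m, rfl⟩ : ∃ m, n = m + 1 := Nat.exists_eq_succ_of_ne_zero (by rintro rfl; simp at h0)
  refine ⟨m, Finsupp.ext (Fin.forall_fin_two.2 ⟨?_, ?_⟩)⟩ <;>
    simp only [Finsupp.add_apply, Finsupp.smul_apply, xyExp_apply_zero, xyExp_apply_one,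
      smul_eq_mul]
  · rw [mul_add, mul_one, mul_comm] at h0; omega
  · rw [mul_add, mul_one, mul_comm] at h1; omega

section Field

variable [Field R]

theorem monomial_add_mem_range_poissonBracket (hp : 1 ≤ p) (hq : 1 ≤ q) {d : Fin 2 →₀ ℕ}
    (hd : (p * d 1 : R) ≠ q * d 0) (c : R) :
    monomial (d + xyExp (p - 1) (q - 1)) c ∈ range (poissonBracket 𝒇) :=
  ⟨monomial d ((p * d 1 - q * d 0 : R)⁻¹ * c), by
    rw [poissonBracket_monomial hp hq, smul_monomial, smul_eq_mul,
      mul_inv_cancel_left₀ (sub_ne_zero.2 hd)]⟩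

variable [CharZero R]

theorem mul_mem_range_poissonBracket_of_coeff_nsmul_add_eq_zero (hp : 1 ≤ p) (hq : 1 ≤ q)
    (hpq : p.Coprime q) {h : MvPolynomial (Fin 2) R}
    (hh : ∀ m : ℕ, coeff (m • xyExp p q + xyExp (p - 1) (q - 1)) h = 0) :
    𝒇 * h ∈ range (poissonBracket 𝒇) := by
  rw [← support_sum_monomial_coeff h, Finset.mul_sum]
  refine Submodule.sum_mem _ fun d hd => ?_
  have hshift : xyExp p q + d = (d + xyExp 1 1) + xyExp (p - 1) (q - 1) := by
    refine Finsupp.ext (Fin.forall_fin_two.2 ⟨?_, ?_⟩) <;>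
      simp only [Finsupp.add_apply, xyExp_apply_zero, xyExp_apply_one] <;> omega
  have hmul : 𝒇 * monomial d (coeff d h) =
      monomial ((d + xyExp 1 1) + xyExp (p - 1) (q - 1)) (coeff d h) := by
    rw [X_pow_mul_X_pow_eq_monomial, monomial_mul, one_mul, hshift]
  rw [hmul]
  refine monomial_add_mem_range_poissonBracket (d := d + xyExp 1 1) hp hq (fun hcast => ?_) _
  simp only [Finsupp.add_apply, xyExp_apply_zero, xyExp_apply_one] at hcast
  obtain ⟨m, rfl⟩ := exists_eq_nsmul_xyExp_add_of_coprime hpq (d := d) (by exact_mod_cast hcast)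
  exact mem_support_iff.1 hd (hh m)

theorem exists_mul_sub_aeval_mul_mem_range (hp : 1 ≤ p) (hq : 1 ≤ q) (hpq : p.Coprime q)
    (g : MvPolynomial (Fin 2) R) :
    ∃ P : Polynomial R, 𝒇 * (g - Polynomial.aeval 𝒇 P * 𝒆) ∈ range (poissonBracket 𝒇) := by
  obtain ⟨P, hP⟩ := exists_coeff_eq_coeff_comp g (nsmul_xyExp_add_injective (q := q) hp _)
  exact ⟨P, mul_mem_range_poissonBracket_of_coeff_nsmul_add_eq_zero hp hq hpq fun m => by
    rw [coeff_sub, coeff_aeval_mul hp, hP, sub_self]⟩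

end Field

theorem dmem_iff_mem_range_poissonBracket (f w : MvPolynomial (Fin 2) ℂ) :
    Dmem f w ↔ w ∈ range (poissonBracket f) := by
  simp only [Dmem, LinearMap.mem_range, poissonBracket_apply, eq_comm]

end Brieskorn

theorem statement13 (p q : ℕ) (hp : 1 ≤ p) (hq : 1 ≤ q) (hpq : Nat.Coprime p q)
    (g : MvPolynomial (Fin 2) ℂ) :
    ∃! P : Polynomial ℂ, ∃ k : ℕ,
      Dmem (X 0 ^ p * X 1 ^ q)
        ((X 0 ^ p * X 1 ^ q : MvPolynomial (Fin 2) ℂ) ^ k *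
          (g - Polynomial.aeval (X 0 ^ p * X 1 ^ q : MvPolynomial (Fin 2) ℂ) P *
            (X 0 ^ (p - 1) * X 1 ^ (q - 1)))) := by
  simp only [Brieskorn.dmem_iff_mem_range_poissonBracket]
  obtain ⟨P, hP⟩ := Brieskorn.exists_mul_sub_aeval_mul_mem_range hp hq hpq g
  refine ⟨P, ⟨1, by rw [pow_one]; exact hP⟩, ?_⟩
  rintro P' ⟨k, hk⟩
  exact Brieskorn.eq_of_pow_mul_sub_aeval_mul_mem_range hp hq hk (by rw [pow_one]; exact hP)
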